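/- Let C be a (1/6)-agreeing (strong) cluster and let C* be the cluster of an optimal correlation clustering OPT with C ⊆ C*. Then |C| ≥ (3/4)|C*|. -/

import Mathlib

open scoped symmDiff Classical

/-- The set of unordered pairs of distinct vertices lying in the same cluster
of the clustering (labeling) `C`. -/
def clusterPairs {V : Type*} {α : Type*} (C : V → α) : Set (Sym2 V) :=
  {s | ¬ s.IsDiag ∧ ∀ u v : V, s = s(u, v) → C u = C v}

/-- The correlation clustering cost of clustering `C` w.r.t. edge set `E`:
the number of violated pairs `|E(C) ∆ E|`. -/
noncomputable def ccCost {V : Type*} {α : Type*} (C : V → α) (E : Set (Sym2 V)) : ℕ :=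
  (clusterPairs C ∆ E).ncard

/-- `C` is a `c`-approximate correlation clustering for the edge set `E`:
its cost is at most `c` times the cost of any clustering. -/
def IsApprox {V : Type*} (c : ℝ) (C : V → ℕ) (E : Set (Sym2 V)) : Prop :=
  ∀ C' : V → ℕ, (ccCost C E : ℝ) ≤ c * (ccCost C' E : ℝ)


/-- The closed neighborhood of `v`: the neighbors of `v` together with `v`. -/
def closedNbhd {V : Type*} (G : SimpleGraph V) (v : V) : Set V :=
  insert v (G.neighborSet v)

/-- A set `K` of vertices is `β`-agreeing if for every `v ∈ K`,
`|N(v) ∆ K| < β·|K|` where `N(v)` is the closed neighborhood. -/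
def Agreeing {V : Type*} (G : SimpleGraph V) (β : ℝ) (K : Set V) : Prop :=
  ∀ v ∈ K, ((closedNbhd G v ∆ K).ncard : ℝ) < β * K.ncard

lemma mem_clusterPairs {V α : Type*} (C : V → α) (a b : V) :
    s(a,b) ∈ clusterPairs C ↔ a ≠ b ∧ C a = C b := by
  constructor
  · rintro ⟨hd, h⟩
    exact ⟨fun hab => hd (by simp [hab]), h a b rfl⟩
  · rintro ⟨hab, hC⟩
    refine ⟨by simp [hab], fun u v huv => ?_⟩
    rcases Sym2.eq_iff.mp huv with ⟨h1, h2⟩ | ⟨h1, h2⟩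
    · rw [← h1, ← h2]; exact hC
    · rw [← h1, ← h2]; exact hC.symm

lemma cost_split {V : Type*} (A E P : Set (Sym2 V)) (hfinAE : (A ∆ E).Finite)
    (hfinP : P.Finite) (hP : P ⊆ A)
    (h : (A ∆ E).ncard ≤ ((A \ P) ∆ E).ncard) : (P \ E).ncard ≤ (P ∩ E).ncard := by
  have h1 : (A ∆ E) ∩ P = P \ E := by
    ext s; simp only [Set.mem_inter_iff, Set.mem_symmDiff, Set.mem_diff]
    constructor
    · rintro ⟨h1 | h1, h2⟩
      · exact ⟨h2, h1.2⟩
      · exact absurd (hP h2) h1.2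
    · rintro ⟨h1, h2⟩; exact ⟨Or.inl ⟨hP h1, h2⟩, h1⟩
  have h2 : (A \ P) ∆ E = ((A ∆ E) \ P) ∪ (P ∩ E) := by
    ext s; simp only [Set.mem_symmDiff, Set.mem_diff, Set.mem_union, Set.mem_inter_iff]
    constructor
    · rintro (⟨⟨hA, hnP⟩, hnE⟩ | ⟨hE, hn⟩)
      · exact Or.inl ⟨Or.inl ⟨hA, hnE⟩, hnP⟩
      · by_cases hp : s ∈ P
        · exact Or.inr ⟨hp, hE⟩
        · exact Or.inl ⟨Or.inr ⟨hE, fun hA => hn ⟨hA, hp⟩⟩, hp⟩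
    · rintro (⟨hA | hE, hnP⟩ | ⟨hp, hE⟩)
      · exact Or.inl ⟨⟨hA.1, hnP⟩, hA.2⟩
      · exact Or.inr ⟨hE.1, fun hc => hE.2 hc.1⟩
      · exact Or.inr ⟨hE, fun hc => hc.2 hp⟩
  have e1 : ((A ∆ E) ∩ P).ncard + ((A ∆ E) \ P).ncard = (A ∆ E).ncard :=
    Set.ncard_inter_add_ncard_diff_eq_ncard _ _ hfinAE
  have e2 : (((A ∆ E) \ P) ∪ (P ∩ E)).ncard = ((A ∆ E) \ P).ncard + (P ∩ E).ncard := by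
    apply Set.ncard_union_eq
    · exact Set.disjoint_left.mpr (fun s hs hs2 => hs.2 hs2.1)
    · exact hfinAE.diff
    · exact hfinP.inter_of_left _
  rw [h2, e2, ← e1, h1] at h
  omega

theorem stmt6 {V : Type*} [Fintype V] [DecidableEq V]
    (G : SimpleGraph V) (K : Set V) (hKne : K.Nonempty)
    (hK : Agreeing G (1/6) K)
    (Copt : V → ℕ)
    (hopt : ∀ C' : V → ℕ, ccCost Copt G.edgeSet ≤ ccCost C' G.edgeSet)
    (i : ℕ) (hsub : K ⊆ {v | Copt v = i}) :
    (3/4 : ℝ) * (({v | Copt v = i} : Set V).ncard : ℝ) ≤ (K.ncard : ℝ) := by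
  set Cs : Set V := {v | Copt v = i} with hCs
  set M : Set V := Cs \ K with hM
  set L : ℕ := Finset.univ.sup Copt + 1 with hLdef
  have hL : ∀ v, Copt v ≠ L := by
    intro v h
    have := Finset.le_sup (f := Copt) (Finset.mem_univ v)
    omega
  set C' : V → ℕ := fun v => if v ∈ K then L else Copt v with hC'
  set P : Set (Sym2 V) := Set.image2 (fun u v => s(u,v)) K M with hPdef
  have hMK : ∀ v, v ∈ M → v ∉ K := fun v hv => hv.2
  -- membership characterization of P
  have memP : ∀ a b : V, s(a,b) ∈ P ↔ (a ∈ K ∧ b ∈ M) ∨ (a ∈ M ∧ b ∈ K) := by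
    intro a b
    constructor
    · rintro ⟨u, hu, v, hv, huv⟩
      rcases Sym2.eq_iff.mp huv.symm with ⟨h1, h2⟩ | ⟨h1, h2⟩
      · exact Or.inl ⟨by rw [h1]; exact hu, by rw [h2]; exact hv⟩
      · exact Or.inr ⟨by rw [h1]; exact hv, by rw [h2]; exact hu⟩
    · rintro (⟨ha, hb⟩ | ⟨ha, hb⟩)
      · exact ⟨a, ha, b, hb, rfl⟩
      · exact ⟨b, hb, a, ha, Sym2.eq_swap⟩
  have hPA : P ⊆ clusterPairs Copt := by
    rintro s ⟨u, hu, v, hv, huv⟩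
    rw [← huv, mem_clusterPairs]
    exact ⟨fun h => hMK v hv (h ▸ hu), (hsub hu).trans hv.1.symm⟩
  -- clusterPairs C' = clusterPairs Copt \ P
  have hCP : clusterPairs C' = clusterPairs Copt \ P := by
    have ifK : ∀ v, v ∈ K → C' v = L := fun v hv => if_pos hv
    have ifN : ∀ v, v ∉ K → C' v = Copt v := fun v hv => if_neg hv
    ext s
    induction s using Sym2.inductionOn with
    | hf a b =>
      rw [Set.mem_diff, mem_clusterPairs, mem_clusterPairs, memP]
      by_cases ha : a ∈ K <;> by_cases hb : b ∈ K
      · rw [ifK a ha, ifK b hb]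
        constructor
        · rintro ⟨hab, -⟩
          exact ⟨⟨hab, (hsub ha).trans (hsub hb).symm⟩,
            by rintro (⟨-, h⟩ | ⟨h, -⟩) <;> exact hMK _ h ‹_›⟩
        · rintro ⟨⟨hab, -⟩, -⟩; exact ⟨hab, rfl⟩
      · rw [ifK a ha, ifN b hb]
        constructor
        · rintro ⟨-, h⟩; exact absurd h.symm (hL b)
        · rintro ⟨⟨hab, hCab⟩, hnP⟩
          exact absurd (Or.inl ⟨ha, ⟨show Copt b = i from hCab.symm.trans (hsub ha), hb⟩⟩) hnP
      · rw [ifN a ha, ifK b hb]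
        constructor
        · rintro ⟨-, h⟩; exact absurd h (hL a)
        · rintro ⟨⟨hab, hCab⟩, hnP⟩
          exact absurd (Or.inr ⟨⟨show Copt a = i from hCab.trans (hsub hb), ha⟩, hb⟩) hnP
      · rw [ifN a ha, ifN b hb]
        constructor
        · rintro ⟨hab, h⟩
          refine ⟨⟨hab, h⟩, ?_⟩
          rintro (⟨h', -⟩ | ⟨-, h'⟩)
          · exact ha h'
          · exact hb h'
        · rintro ⟨⟨hab, h⟩, -⟩; exact ⟨hab, h⟩
  -- the key inequality |P \ E| ≤ |P ∩ E|
  have hsplit : (P \ G.edgeSet).ncard ≤ (P ∩ G.edgeSet).ncard := by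
    apply cost_split (clusterPairs Copt) G.edgeSet P (Set.toFinite _) (Set.toFinite _) hPA
    have := hopt C'
    rwa [ccCost, ccCost, hCP] at this
  have hPcard : P.ncard = K.ncard * M.ncard := by
    have himg : P = (fun p : V × V => s(p.1, p.2)) '' (K ×ˢ M) := by
      ext s
      simp only [Set.mem_image, Set.mem_prod, Prod.exists, hPdef, Set.mem_image2]
      constructor
      · rintro ⟨u, hu, v, hv, huv⟩; exact ⟨u, v, ⟨hu, hv⟩, huv⟩
      · rintro ⟨u, v, ⟨hu, hv⟩, huv⟩; exact ⟨u, hu, v, hv, huv⟩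
    rw [himg, Set.ncard_image_of_injOn, Set.ncard_eq_toFinset_card' (K ×ˢ M),
      Set.toFinset_prod, Finset.card_product, ← Set.ncard_eq_toFinset_card' K,
      ← Set.ncard_eq_toFinset_card' M]
    rintro ⟨u, v⟩ ⟨hu, hv⟩ ⟨u', v'⟩ ⟨hu', hv'⟩ h
    simp only at h
    rcases Sym2.eq_iff.mp h with ⟨h1, h2⟩ | ⟨h1, h2⟩
    · simp [h1, h2]
    · exact absurd (h1 ▸ hu) (hMK _ hv')
  have hPdecomp : (P ∩ G.edgeSet).ncard + (P \ G.edgeSet).ncard = P.ncard :=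
    Set.ncard_inter_add_ncard_diff_eq_ncard _ _ (Set.toFinite _)
  -- bound |P ∩ E| by the sum of symmetric differences
  have hbound : ((P ∩ G.edgeSet).ncard : ℝ) <
      (1/6 : ℝ) * K.ncard * K.ncard := by
    have hsum : (P ∩ G.edgeSet).ncard ≤
        ∑ v ∈ K.toFinset, (closedNbhd G v ∆ K).ncard := by
      have hsub2 : (P ∩ G.edgeSet).toFinset ⊆ K.toFinset.biUnion
          (fun v => (M ∩ G.neighborSet v).toFinset.image (fun w => s(v, w))) := by
        intro s hs
        rw [Set.mem_toFinset] at hs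
        obtain ⟨⟨u, hu, v, hv, huv⟩, hE⟩ := hs
        rw [Finset.mem_biUnion]
        refine ⟨u, Set.mem_toFinset.mpr hu, ?_⟩
        rw [Finset.mem_image]
        refine ⟨v, Set.mem_toFinset.mpr ⟨hv, ?_⟩, huv⟩
        rw [SimpleGraph.mem_neighborSet, ← SimpleGraph.mem_edgeSet]
        rwa [← huv] at hE
      calc (P ∩ G.edgeSet).ncard = (P ∩ G.edgeSet).toFinset.card :=
            Set.ncard_eq_toFinset_card' _
        _ ≤ _ := Finset.card_le_card hsub2
        _ ≤ ∑ v ∈ K.toFinset,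
            ((M ∩ G.neighborSet v).toFinset.image (fun w => s(v, w))).card :=
            Finset.card_biUnion_le
        _ ≤ ∑ v ∈ K.toFinset, (closedNbhd G v ∆ K).ncard := by
            apply Finset.sum_le_sum
            intro v hv
            calc ((M ∩ G.neighborSet v).toFinset.image (fun w => s(v, w))).card
                ≤ (M ∩ G.neighborSet v).toFinset.card := Finset.card_image_le
              _ = (M ∩ G.neighborSet v).ncard := (Set.ncard_eq_toFinset_card' _).symm
              _ ≤ (closedNbhd G v ∆ K).ncard := by
                  apply Set.ncard_le_ncard _ (Set.toFinite _)
                  rintro w ⟨hwM, hwN⟩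
                  exact Or.inl ⟨Set.mem_insert_of_mem _ hwN, hMK _ hwM⟩
    have hsumlt : (∑ v ∈ K.toFinset, ((closedNbhd G v ∆ K).ncard : ℝ)) <
        ∑ v ∈ K.toFinset, (1/6 : ℝ) * K.ncard := by
      apply Finset.sum_lt_sum_of_nonempty
      · obtain ⟨v, hv⟩ := hKne; exact ⟨v, Set.mem_toFinset.mpr hv⟩
      · intro v hv; exact hK v (Set.mem_toFinset.mp hv)
    have : (K.toFinset.card : ℝ) = K.ncard := by rw [Set.ncard_eq_toFinset_card']
    calc ((P ∩ G.edgeSet).ncard : ℝ) ≤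
        ∑ v ∈ K.toFinset, ((closedNbhd G v ∆ K).ncard : ℝ) := by
          exact_mod_cast Nat.cast_le.mpr hsum
      _ < ∑ v ∈ K.toFinset, (1/6 : ℝ) * K.ncard := hsumlt
      _ = (1/6 : ℝ) * K.ncard * K.ncard := by
          rw [Finset.sum_const, nsmul_eq_mul, this]; ring
  -- assemble
  have hCscard : Cs.ncard = K.ncard + M.ncard := by
    have : Cs = K ∪ M := by
      ext v; constructor
      · intro hv; by_cases h : v ∈ K
        · exact Or.inl h
        · exact Or.inr ⟨hv, h⟩
      · rintro (hv | hv)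
        · exact hsub hv
        · exact hv.1
    rw [this, Set.ncard_union_eq (Set.disjoint_left.mpr (fun v hv hv2 => hMK v hv2 hv))
      (Set.toFinite _) (Set.toFinite _)]
  have hkm : (K.ncard * M.ncard : ℝ) ≤ 2 * (P ∩ G.edgeSet).ncard := by
    have : K.ncard * M.ncard ≤ 2 * (P ∩ G.edgeSet).ncard := by omega
    exact_mod_cast this
  have hk0 : (0 : ℝ) < K.ncard := by
    have := hKne.ncard_pos (Set.toFinite _)
    exact_mod_cast this
  have h3m : (3 : ℝ) * M.ncard < K.ncard := by
    nlinarith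
  rw [hCscard]
  push_cast
  linarith
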